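/- arXiv:2501.16683 — 2 statements merged into one kernel-verified Lean document; each statement's English description precedes it below -/
import Mathlib

section
/- (Controllability Gramian of the continuous-time I-PORK ROM.) Let Q_s be an invertible Hermitian solution of -S_b* Q_s - Q_s S_b + L_b* L_b = 0, and set A_r = -Q_s^{-1} S_b* Q_s, B_r = Q_s^{-1} L_b*. Then P_r = Q_s^{-1} satisfies the Lyapunov equation A_r P_r + P_r A_r* + B_r B_r* = 0. -/
open Matrix
open scoped Matrix

namespace Matrix

variable {n p α : Type*} [Fintype n] [DecidableEq n] [Fintype p] [CommRing α] [StarRing α]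

theorem lyapunov_inv_congr {Q S : Matrix n n α} (L : Matrix p n α)
    (hQ : Q.IsHermitian) (hU : IsUnit Q) :
    -(Q⁻¹ * Sᴴ * Q) * Q⁻¹ + Q⁻¹ * (-(Q⁻¹ * Sᴴ * Q))ᴴ + Q⁻¹ * Lᴴ * (Q⁻¹ * Lᴴ)ᴴ
      = Q⁻¹ * (-(Sᴴ * Q) - Q * S + Lᴴ * L) * Q⁻¹ := by
  have hP : Q⁻¹ᴴ = Q⁻¹ := hQ.inv.eq
  have hQP : Q * Q⁻¹ = 1 := mul_nonsing_inv Q ((isUnit_iff_isUnit_det Q).mp hU)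
  have hA : -(Q⁻¹ * Sᴴ * Q) * Q⁻¹ = Q⁻¹ * -(Sᴴ * Q) * Q⁻¹ := by
    simp only [Matrix.neg_mul, Matrix.mul_neg, Matrix.mul_assoc, hQP]
  have hA_conj : Q⁻¹ * (-(Q⁻¹ * Sᴴ * Q))ᴴ = Q⁻¹ * -(Q * S) * Q⁻¹ := by
    simp only [conjTranspose_neg, conjTranspose_mul, conjTranspose_conjTranspose, hQ.eq, hP,
      Matrix.neg_mul, Matrix.mul_neg, Matrix.mul_assoc]
  have hB : Q⁻¹ * Lᴴ * (Q⁻¹ * Lᴴ)ᴴ = Q⁻¹ * (Lᴴ * L) * Q⁻¹ := by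
    simp only [conjTranspose_mul, conjTranspose_conjTranspose, hP, Matrix.mul_assoc]
  rw [hA, hA_conj, hB, sub_eq_add_neg, Matrix.mul_add, Matrix.mul_add, Matrix.add_mul,
    Matrix.add_mul]

end Matrix

theorem ipork_controllability_gramian
    {m r : ℕ}
    (S_b : Matrix (Fin r) (Fin r) ℂ) (L_b : Matrix (Fin m) (Fin r) ℂ)
    (Q_s : Matrix (Fin r) (Fin r) ℂ)
    (hHerm : Q_s.IsHermitian) (hUnit : IsUnit Q_s)
    (hLyap : -(S_bᴴ * Q_s) - Q_s * S_b + L_bᴴ * L_b = 0)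
    (A_r : Matrix (Fin r) (Fin r) ℂ) (hA : A_r = -(Q_s⁻¹ * S_bᴴ * Q_s))
    (B_r : Matrix (Fin r) (Fin m) ℂ) (hB : B_r = Q_s⁻¹ * L_bᴴ) :
    A_r * Q_s⁻¹ + Q_s⁻¹ * A_rᴴ + B_r * B_rᴴ = 0 := by
  subst hA hB
  rw [lyapunov_inv_congr L_b hHerm hUnit, hLyap, Matrix.mul_zero, Matrix.zero_mul]
end

section
/- (Theorem 1(2), discrete-time I-PORK Gramian.) Let Q̄_s be an invertible Hermitian solution of S̄_b* Q̄_s S̄_b - Q̄_s + L̄_b* L̄_b = 0, and set A_r = Q̄_s^{-1} S̄_b* Q̄_s and B_r = Q̄_s^{-1} L̄_b*. Then P_r = Q̄_s^{-1} satisfies the discrete-time Lyapunov equation A_r P_r A_r* - P_r + B_r B_r* = 0. -/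
/-! Since `Q` is Hermitian, `(Q⁻¹ Sᴴ Q)ᴴ = Q S Q⁻¹`, so the Lyapunov residual of
`(Q⁻¹ Sᴴ Q, Q⁻¹ Lᴴ)` at `Q⁻¹` is the congruence `Q⁻¹ (·) Q⁻¹` of the Stein residual of
`(S, L)` at `Q`, which vanishes. -/

open Matrix
open scoped Matrix

theorem Matrix.IsHermitian.inv_mul_stein_mul_inv {n k α : Type*} [Fintype n] [Fintype k]
    [DecidableEq n] [CommRing α] [StarRing α] {Q : Matrix n n α} (hQ : Q.IsHermitian)
    (hU : IsUnit Q) (S : Matrix n n α) (L : Matrix k n α) :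
    Q⁻¹ * Sᴴ * Q * Q⁻¹ * (Q⁻¹ * Sᴴ * Q)ᴴ - Q⁻¹ + Q⁻¹ * Lᴴ * (Q⁻¹ * Lᴴ)ᴴ
      = Q⁻¹ * (Sᴴ * Q * S - Q + Lᴴ * L) * Q⁻¹ := by
  have hdet : IsUnit Q.det := (isUnit_iff_isUnit_det Q).mp hU
  have hinv : Q⁻¹ᴴ = Q⁻¹ := by rw [conjTranspose_nonsing_inv, hQ.eq]
  simp only [conjTranspose_mul, conjTranspose_conjTranspose, hinv, hQ.eq, mul_add, mul_sub,
    add_mul, sub_mul, Matrix.mul_assoc, mul_nonsing_inv _ hdet, Matrix.mul_one]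

theorem dt_ipork_gramian
    {m r : ℕ}
    (Sb : Matrix (Fin r) (Fin r) ℂ) (Lb : Matrix (Fin m) (Fin r) ℂ)
    (Qs : Matrix (Fin r) (Fin r) ℂ)
    (hHerm : Qs.IsHermitian) (hUnit : IsUnit Qs)
    (hStein : Sbᴴ * Qs * Sb - Qs + Lbᴴ * Lb = 0)
    (A_r : Matrix (Fin r) (Fin r) ℂ) (hA : A_r = Qs⁻¹ * Sbᴴ * Qs)
    (B_r : Matrix (Fin r) (Fin m) ℂ) (hB : B_r = Qs⁻¹ * Lbᴴ) :
    A_r * Qs⁻¹ * A_rᴴ - Qs⁻¹ + B_r * B_rᴴ = 0 := by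
  rw [hA, hB, hHerm.inv_mul_stein_mul_inv hUnit, hStein, Matrix.mul_zero, Matrix.zero_mul]
end
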